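/- arXiv:2103.11914 — 2 statements merged into one kernel-verified Lean document; each statement's English description precedes it below -/
import Mathlib

section
/- Let H ≥ 0 be a selfadjoint operator on a Hilbert space with a unit eigenvector ψ of eigenvalue λ ≥ 0, and let V ≥ 0 be a selfadjoint operator such that ‖√(H+εI) φ‖² ≥ ‖√(V+εI) φ‖² for all φ in the form domain (valid for all ε > 0, with ψ in the appropriate domains). Then for every t > 0, e^{-tλ} ≤ ⟨ψ, e^{-tV} ψ⟩ ≤ 1. -/
/-! Testing the form inequality at `ε = 1` on `ψ` gives `⟪ψ, V ψ⟫ ≤ ⟪ψ, T ψ⟫ = λ`. The function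
`s ↦ exp (-t s)` lies above its tangent line at the mean `⟪ψ, V ψ⟫`; by monotonicity of the
functional calculus the same holds for the operators, and taking the expectation in `ψ` gives
Jensen's inequality `exp (-t ⟪ψ, V ψ⟫) ≤ ⟪ψ, exp (-t V) ψ⟫`. The upper bound is `exp (-t V) ≤ 1`,
as `V ≥ 0`. -/

open scoped InnerProductSpace

namespace ContinuousLinearMap

variable {E : Type*} [NormedAddCommGroup E] [InnerProductSpace ℂ E]

lemma re_inner_le_re_inner_of_le {A B : E →L[ℂ] E} (h : A ≤ B) (x : E) :
    (⟪x, A x⟫_ℂ).re ≤ (⟪x, B x⟫_ℂ).re := by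
  have := ((le_def A B).1 h).re_inner_nonneg_right x
  rwa [sub_apply, inner_sub_right, RCLike.re_to_complex, Complex.sub_re, sub_nonneg] at this

variable [CompleteSpace E]

lemma nonneg_of_re_inner_nonneg {A : E →L[ℂ] E} (hA : IsSelfAdjoint A)
    (h : ∀ x, 0 ≤ (⟪x, A x⟫_ℂ).re) : 0 ≤ A := by
  refine (nonneg_iff_isPositive A).2 ⟨hA.isSymmetric, fun x => ?_⟩
  rw [reApplyInnerSelf_apply, inner_re_symm]
  exact h x

lemma re_inner_cfc_le_norm_sq {f : ℝ → ℝ} {A : E →L[ℂ] E}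
    (hf : ∀ s ∈ spectrum ℝ A, f s ≤ 1) (x : E) : (⟪x, cfc f A x⟫_ℂ).re ≤ ‖x‖ ^ 2 := by
  simpa [← inner_self_eq_norm_sq (𝕜 := ℂ)] using re_inner_le_re_inner_of_le (cfc_le_one f A hf) x

lemma re_inner_cfc_const_add_mul {A : E →L[ℂ] E} (hA : IsSelfAdjoint A) (a b : ℝ) (x : E) :
    (⟪x, cfc (fun s => a + b * s) A x⟫_ℂ).re = a * ‖x‖ ^ 2 + b * (⟪x, A x⟫_ℂ).re := by
  rw [cfc_const_add a (b * ·) A, cfc_const_mul_id b A]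
  simp [Algebra.algebraMap_eq_smul_one, ← Complex.coe_smul, inner_self_eq_norm_sq_to_K,
    ← Complex.ofReal_pow]

lemma exp_re_inner_le_re_inner_cfc_exp {A : E →L[ℂ] E} (hA : IsSelfAdjoint A) {x : E}
    (hx : ‖x‖ = 1) (t : ℝ) :
    Real.exp (t * (⟪x, A x⟫_ℂ).re) ≤ (⟪x, cfc (fun s => Real.exp (t * s)) A x⟫_ℂ).re := by
  set c := (⟪x, A x⟫_ℂ).re
  have tangent : ∀ s, Real.exp (t * c) * (1 - t * c) + Real.exp (t * c) * t * s
      ≤ Real.exp (t * s) := fun s => calc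
    _ = Real.exp (t * c) * (t * (s - c) + 1) := by ring
    _ ≤ Real.exp (t * c) * Real.exp (t * (s - c)) := by gcongr; exact Real.add_one_le_exp _
    _ = Real.exp (t * s) := by rw [← Real.exp_add]; ring_nf
  have := re_inner_le_re_inner_of_le (cfc_mono (a := A) fun s _ => tangent s) x
  rw [re_inner_cfc_const_add_mul hA, hx] at this
  convert this using 1
  ring

lemma norm_cfc_sqrt_add_apply_sq {A : E →L[ℂ] E} (hA : 0 ≤ A) {ε : ℝ} (hε : 0 ≤ ε) (x : E) :
    ‖cfc (fun s => √(s + ε)) A x‖ ^ 2 = (⟪x, A x⟫_ℂ).re + ε * ‖x‖ ^ 2 := by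
  set S := cfc (fun s => √(s + ε)) A
  have hS : S * S = cfc (fun s => ε + 1 * s) A := by
    rw [← cfc_mul (fun s => √(s + ε)) (fun s => √(s + ε)) A]
    refine cfc_congr fun s hs => ?_
    rw [Real.mul_self_sqrt (by linarith [spectrum_nonneg_of_nonneg hA hs])]
    ring
  have hsymm : ⟪S x, S x⟫_ℂ = ⟪x, (S * S) x⟫_ℂ :=
    (cfc_predicate (fun s => √(s + ε)) A).isSymmetric _ _
  rw [← inner_self_eq_norm_sq (𝕜 := ℂ), hsymm, hS, RCLike.re_to_complex,
    re_inner_cfc_const_add_mul (IsSelfAdjoint.of_nonneg hA)]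
  ring

end ContinuousLinearMap

theorem ground_state_exp_bound_general
    {E : Type*} [NormedAddCommGroup E] [InnerProductSpace ℂ E] [CompleteSpace E]
    (T V : E →L[ℂ] E) (hT : IsSelfAdjoint T) (hV : IsSelfAdjoint V)
    (hTpos : ∀ x : E, 0 ≤ (inner ℂ x (T x) : ℂ).re)
    (hVpos : ∀ x : E, 0 ≤ (inner ℂ x (V x) : ℂ).re)
    (ψ : E) (hψ : ‖ψ‖ = 1) (lam : ℝ)
    (heig : T ψ = ((lam : ℝ) : ℂ) • ψ)
    (hform : ∀ ε > (0:ℝ), ∀ φ : E,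
      ‖cfc (fun s : ℝ => Real.sqrt (s + ε)) V φ‖ ^ 2 ≤
        ‖cfc (fun s : ℝ => Real.sqrt (s + ε)) T φ‖ ^ 2)
    (t : ℝ) (ht : 0 < t) :
    Real.exp (-t * lam) ≤ (inner ℂ ψ ((cfc (fun s : ℝ => Real.exp (-t * s)) V) ψ) : ℂ).re ∧
      (inner ℂ ψ ((cfc (fun s : ℝ => Real.exp (-t * s)) V) ψ) : ℂ).re ≤ 1 := by
  have hVnn : 0 ≤ V := ContinuousLinearMap.nonneg_of_re_inner_nonneg hV hVpos
  have hTnn : 0 ≤ T := ContinuousLinearMap.nonneg_of_re_inner_nonneg hT hTpos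
  have hTψ : (⟪ψ, T ψ⟫_ℂ).re = lam := by simp [heig, inner_self_eq_norm_sq_to_K, hψ]
  have hVψ : (⟪ψ, V ψ⟫_ℂ).re ≤ lam := by
    have := hform 1 one_pos ψ
    rw [ContinuousLinearMap.norm_cfc_sqrt_add_apply_sq hVnn zero_le_one,
      ContinuousLinearMap.norm_cfc_sqrt_add_apply_sq hTnn zero_le_one, hTψ] at this
    linarith
  constructor
  · calc Real.exp (-t * lam) ≤ Real.exp (-t * (⟪ψ, V ψ⟫_ℂ).re) :=
        Real.exp_le_exp.2 (by nlinarith)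
      _ ≤ _ := ContinuousLinearMap.exp_re_inner_le_re_inner_cfc_exp hV hψ (-t)
  · have hexp_le_one : ∀ s ∈ spectrum ℝ V, Real.exp (-t * s) ≤ 1 := fun s hs =>
      Real.exp_le_one_iff.2 (by nlinarith [spectrum_nonneg_of_nonneg hVnn hs])
    simpa [hψ] using ContinuousLinearMap.re_inner_cfc_le_norm_sq hexp_le_one ψ

/-- Jensen-type bound for ground states: if `T ≥ 0` is selfadjoint with unit eigenvector
`ψ` of eigenvalue `λ ≥ 0`, `V ≥ 0` is selfadjoint, and the form inequality
`‖√(V+εI) φ‖² ≤ ‖√(T+εI) φ‖²` holds for all `ε > 0` and all `φ`, then for every `t > 0`,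
`e^{-tλ} ≤ ⟨ψ, e^{-tV} ψ⟩ ≤ 1`. -/
theorem ground_state_exp_bound
    {E : Type*} [NormedAddCommGroup E] [InnerProductSpace ℂ E] [CompleteSpace E]
    (T V : E →L[ℂ] E) (hT : IsSelfAdjoint T) (hV : IsSelfAdjoint V)
    (hTpos : ∀ x : E, 0 ≤ (inner ℂ x (T x) : ℂ).re)
    (hVpos : ∀ x : E, 0 ≤ (inner ℂ x (V x) : ℂ).re)
    (ψ : E) (hψ : ‖ψ‖ = 1) (lam : ℝ) (hlam : 0 ≤ lam)
    (heig : T ψ = ((lam : ℝ) : ℂ) • ψ)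
    (hform : ∀ ε > (0:ℝ), ∀ φ : E,
      ‖cfc (fun s : ℝ => Real.sqrt (s + ε)) V φ‖ ^ 2 ≤
        ‖cfc (fun s : ℝ => Real.sqrt (s + ε)) T φ‖ ^ 2)
    (t : ℝ) (ht : 0 < t) :
    Real.exp (-t * lam) ≤ (inner ℂ ψ ((cfc (fun s : ℝ => Real.exp (-t * s)) V) ψ) : ℂ).re ∧
      (inner ℂ ψ ((cfc (fun s : ℝ => Real.exp (-t * s)) V) ψ) : ℂ).re ≤ 1 :=
  ground_state_exp_bound_general T V hT hV hTpos hVpos ψ hψ lam heig hform t ht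
end

section
/- Let μ be a regular Borel probability measure on a smooth manifold X with Poisson bracket {·,·}, and suppose ∫_X {h, a} dμ = 0 and −i ∫_X ā {h, a} dμ ≥ 0 for all a ∈ C_c^∞(X), where h ∈ C^∞(X) is real-valued. Then ∫_X f {h, g} dμ = 0 for all real-valued f, g ∈ C_c^∞(X). -/
open MeasureTheory ComplexOrder

/-! Writing `a = f + ig`, the imaginary part of `ā {h, a}` is `f {h, g} - g {h, f}`, so positivity
gives `∫ g {h, f} dμ ≤ ∫ f {h, g} dμ`; exchanging `f` and `g` makes this an equality. On the
other hand, by the Leibniz rule and invariance, `∫ f {h, g} + ∫ g {h, f} = ∫ {h, fg} = 0`. -/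

namespace GroundState

variable {X : Type*} [MeasurableSpace X] {μ : Measure X}

theorem im_nonneg_of_nonneg_neg_I_mul {z : ℂ} (h : 0 ≤ -Complex.I * z) : 0 ≤ z.im := by
  simpa using (Complex.le_def.mp h).1

theorem im_sub_I_mul_mul_add_I_mul (f g u v : ℝ) :
    (((f : ℂ) - Complex.I * g) * ((u : ℂ) + Complex.I * v)).im = f * v - g * u := by
  simp only [Complex.mul_im, Complex.sub_re, Complex.sub_im, Complex.add_re, Complex.add_im,
    Complex.mul_re, Complex.I_re, Complex.I_im, Complex.ofReal_re, Complex.ofReal_im]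
  ring

theorem integral_mul_le_integral_mul_of_nonneg_neg_I_mul {f g u v : X → ℝ}
    (hfu : Integrable (fun x => f x * u x) μ) (hfv : Integrable (fun x => f x * v x) μ)
    (hgu : Integrable (fun x => g x * u x) μ) (hgv : Integrable (fun x => g x * v x) μ)
    (hpos : 0 ≤ -Complex.I * ∫ x, ((f x : ℂ) - Complex.I * (g x : ℂ)) *
        ((u x : ℂ) + Complex.I * (v x : ℂ)) ∂μ) :
    ∫ x, g x * u x ∂μ ≤ ∫ x, f x * v x ∂μ := by
  have hexpand : (fun x => ((f x : ℂ) - Complex.I * (g x : ℂ)) * ((u x : ℂ) + Complex.I * (v x : ℂ)))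
      = fun x => ((f x * u x + g x * v x : ℝ) : ℂ) + Complex.I * ((f x * v x - g x * u x : ℝ) : ℂ) := by
    funext x
    push_cast
    linear_combination -(g x * v x : ℂ) * Complex.I_sq
  have hint : Integrable (fun x => ((f x : ℂ) - Complex.I * (g x : ℂ)) *
      ((u x : ℂ) + Complex.I * (v x : ℂ))) μ := by
    rw [hexpand]
    exact (hfu.add hgv).ofReal.add ((hfv.sub hgu).ofReal.const_mul Complex.I)
  have him := im_nonneg_of_nonneg_neg_I_mul hpos
  rw [← RCLike.im_to_complex, ← integral_im hint] at him
  simp only [RCLike.im_to_complex, im_sub_I_mul_mul_add_I_mul] at him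
  rw [integral_sub hfv hgu] at him
  linarith

theorem integral_mul_add_integral_mul_eq_zero {𝒟 : Set (X → ℝ)}
    (hmul : ∀ f ∈ 𝒟, ∀ g ∈ 𝒟, f * g ∈ 𝒟) {L : (X → ℝ) → (X → ℝ)}
    (hLeib : ∀ f ∈ 𝒟, ∀ g ∈ 𝒟, L (f * g) = f * L g + g * L f)
    (hint : ∀ f ∈ 𝒟, ∀ g ∈ 𝒟, Integrable (fun x => f x * L g x) μ)
    (hinv : ∀ f ∈ 𝒟, ∫ x, L f x ∂μ = 0) {f g : X → ℝ} (hf : f ∈ 𝒟) (hg : g ∈ 𝒟) :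
    ∫ x, f x * L g x ∂μ + ∫ x, g x * L f x ∂μ = 0 := by
  rw [← integral_add (hint f hf g hg) (hint g hg f hf), ← hinv _ (hmul f hf g hg),
    hLeib f hf g hg]
  rfl

end GroundState

open GroundState in
theorem poisson_ground_state_vanishing_general
    {X : Type*} [MeasurableSpace X]
    (μ : Measure X)
    (𝒟 : Set (X → ℝ))
    (hmul : ∀ f ∈ 𝒟, ∀ g ∈ 𝒟, f * g ∈ 𝒟)
    (L : (X → ℝ) → (X → ℝ))
    (hLeib : ∀ f ∈ 𝒟, ∀ g ∈ 𝒟, L (f * g) = f * L g + g * L f)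
    (hint : ∀ f ∈ 𝒟, ∀ g ∈ 𝒟, Integrable (fun x => f x * L g x) μ)
    (hinv : ∀ f ∈ 𝒟, ∫ x, L f x ∂μ = 0)
    (hpos : ∀ f ∈ 𝒟, ∀ g ∈ 𝒟,
      0 ≤ -Complex.I * ∫ x, ((f x : ℂ) - Complex.I * (g x : ℂ)) *
        ((L f x : ℂ) + Complex.I * (L g x : ℂ)) ∂μ) :
    ∀ f ∈ 𝒟, ∀ g ∈ 𝒟, ∫ x, f x * L g x ∂μ = 0 := by
  intro f hf g hg
  have hle : ∫ x, g x * L f x ∂μ ≤ ∫ x, f x * L g x ∂μ :=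
    integral_mul_le_integral_mul_of_nonneg_neg_I_mul (hint f hf f hf) (hint f hf g hg)
      (hint g hg f hf) (hint g hg g hg) (hpos f hf g hg)
  have hge : ∫ x, f x * L g x ∂μ ≤ ∫ x, g x * L f x ∂μ :=
    integral_mul_le_integral_mul_of_nonneg_neg_I_mul (hint g hg g hg) (hint g hg f hf)
      (hint f hf g hg) (hint f hf f hf) (hpos g hg f hf)
  have hsum := integral_mul_add_integral_mul_eq_zero hmul hLeib hint hinv hf hg
  linarith

/-- Abstract ground-state condition for a classical dynamical system: `𝒟` models the
real-valued functions in `C_c^∞(X)`, `L a` models the Poisson bracket `{h, a}`, which is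
linear and satisfies the Leibniz rule. If `∫ {h,a} dμ = 0` and
`−i ∫ ā {h,a} dμ ≥ 0` (with `a = f + ig`) for all `f, g ∈ 𝒟`, then
`∫ f {h,g} dμ = 0` for all real `f, g ∈ 𝒟`. -/
theorem poisson_ground_state_vanishing
    {X : Type*} [TopologicalSpace X] [MeasurableSpace X] [BorelSpace X]
    (μ : Measure X) [IsProbabilityMeasure μ] (hreg : μ.Regular)
    (𝒟 : Set (X → ℝ))
    (hmul : ∀ f ∈ 𝒟, ∀ g ∈ 𝒟, f * g ∈ 𝒟)
    (hneg : ∀ f ∈ 𝒟, -f ∈ 𝒟)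
    (L : (X → ℝ) → (X → ℝ))
    (hLlin : IsLinearMap ℝ L)
    (hLeib : ∀ f ∈ 𝒟, ∀ g ∈ 𝒟, L (f * g) = f * L g + g * L f)
    (hintL : ∀ f ∈ 𝒟, Integrable (L f) μ)
    (hint : ∀ f ∈ 𝒟, ∀ g ∈ 𝒟, Integrable (fun x => f x * L g x) μ)
    (hinv : ∀ f ∈ 𝒟, ∫ x, L f x ∂μ = 0)
    (hpos : ∀ f ∈ 𝒟, ∀ g ∈ 𝒟,
      0 ≤ -Complex.I * ∫ x, ((f x : ℂ) - Complex.I * (g x : ℂ)) *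
        ((L f x : ℂ) + Complex.I * (L g x : ℂ)) ∂μ) :
    ∀ f ∈ 𝒟, ∀ g ∈ 𝒟, ∫ x, f x * L g x ∂μ = 0 :=
  poisson_ground_state_vanishing_general μ 𝒟 hmul L hLeib hint hinv hpos
end
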